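/- Let S be a dataset of 100 samples (x_0,y_0),…,(x_99,y_99) ∈ ℝ^d × Y, and let F̂⁰, F̂¹, F̂² be certifiable classifiers such that for every index i < 100: F̂⁰(x_i) = (y_i, true) if and only if 0 ≤ i ≤ 49; F̂¹(x_i) = (y_i, true) if and only if 25 ≤ i ≤ 74; and F̂²(x_i) = (y_i, true) if and only if 0 ≤ i ≤ 24 or 50 ≤ i ≤ 74. Then CRA(F̂⁰,S) = CRA(F̂¹,S) = CRA(F̂²,S) = 1/2, while the uniform voting ensemble Ê of F̂⁰, F̂¹, F̂² (weights w = (1/3, 1/3, 1/3)) satisfies CRA(Ê,S) = 3/4; in particular the uniform voting ensemble strictly outperforms each of its constituent classifiers on S. -/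
import Mathlib



/-- The input space ℝ^d with the Euclidean norm. -/
abbrev Inp (d : ℕ) := EuclideanSpace ℝ (Fin d)

/-- A certifiable classifier `F : ℝ^d → Y × Bool` is sound if whenever its certificate
component is `true` at `x`, its label component is constant on the ε-ball around `x`. -/
def Sound {d m : ℕ} (ε : ℝ) (F : Inp d → Fin m × Bool) : Prop :=
  ∀ x x' : Inp d, (F x).2 = true → ‖x' - x‖ ≤ ε → (F x').1 = (F x).1

/-- The cascading ensemble: return the output of the constituent with the least index whose
certificate is `true`, defaulting to the last constituent if none is certified. -/
def cascade {d m N : ℕ} (hN : 0 < N) (F : Fin N → Inp d → Fin m × Bool) (x : Inp d) :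
    Fin m × Bool :=
  if h : (Finset.univ.filter fun j => (F j x).2 = true).Nonempty then
    F ((Finset.univ.filter fun j => (F j x).2 = true).min' h) x
  else
    F ⟨N - 1, Nat.sub_lt hN Nat.one_pos⟩ x

/-- `vote F w x j c`: total weight of constituents outputting `(j, c)` at `x`. -/
noncomputable def vote {d m N : ℕ} (F : Fin N → Inp d → Fin m × Bool) (w : Fin N → ℝ)
    (x : Inp d) (j : Fin m) (c : Bool) : ℝ :=
  ∑ i : Fin N, w i * (if F i x = (j, c) then 1 else 0)

/-- `voteTotal F w x j = v_x^w(j)`: total vote for label `j` regardless of certificate. -/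
noncomputable def voteTotal {d m N : ℕ} (F : Fin N → Inp d → Fin m × Bool) (w : Fin N → ℝ)
    (x : Inp d) (j : Fin m) : ℝ :=
  vote F w x j false + vote F w x j true

/-- `voteNC F w x = v_x^w(*, false)`: total vote carrying a `false` certificate. -/
noncomputable def voteNC {d m N : ℕ} (F : Fin N → Inp d → Fin m × Bool) (w : Fin N → ℝ)
    (x : Inp d) : ℝ :=
  ∑ j : Fin m, vote F w x j false

/-- The label of the weighted voting ensemble: the least `j` maximizing `v_x^w(j)`. -/
noncomputable def ensLabel {d m N : ℕ} (hm : 0 < m) (F : Fin N → Inp d → Fin m × Bool)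
    (w : Fin N → ℝ) (x : Inp d) : Fin m :=
  (Finset.univ.filter fun j => ∀ k, voteTotal F w x k ≤ voteTotal F w x j).min'
    (by
      obtain ⟨b, _, hb⟩ := Finset.exists_max_image (Finset.univ : Finset (Fin m))
        (voteTotal F w x) ⟨⟨0, hm⟩, Finset.mem_univ _⟩
      exact ⟨b, Finset.mem_filter.mpr ⟨Finset.mem_univ _, fun k => hb k (Finset.mem_univ _)⟩⟩)

open Classical in
/-- The certificate of the weighted voting ensemble. -/
noncomputable def ensCert {d m N : ℕ} (hm : 0 < m) (F : Fin N → Inp d → Fin m × Bool)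
    (w : Fin N → ℝ) (x : Inp d) : Bool :=
  if ∀ j : Fin m, j ≠ ensLabel hm F w x →
      voteNC F w x + vote F w x j true < vote F w x (ensLabel hm F w x) true
  then true else false

/-- The weighted voting ensemble. -/
noncomputable def ensemble {d m N : ℕ} (hm : 0 < m) (F : Fin N → Inp d → Fin m × Bool)
    (w : Fin N → ℝ) (x : Inp d) : Fin m × Bool :=
  (ensLabel hm F w x, ensCert hm F w x)

/-- Certified robust accuracy of a classifier on a dataset of `k` samples. -/
noncomputable def CRA {d m k : ℕ} (F : Inp d → Fin m × Bool)
    (x : Fin k → Inp d) (y : Fin k → Fin m) : ℝ :=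
  ((Finset.univ.filter fun i : Fin k => F (x i) = (y i, true)).card : ℝ) / k


lemma sum3 (c : Fin 3) (f : Fin 3 → ℝ) (a : ℝ) (H : ∀ i, i ≠ c → f i = a) :
    ∑ i, f i = a + a + f c := by
  rw [← Finset.add_sum_erase _ f (Finset.mem_univ c),
    Finset.sum_congr rfl (fun i hi => H i (Finset.ne_of_mem_erase hi)),
    Finset.sum_const, Finset.card_erase_of_mem (Finset.mem_univ c)]
  simp
  ring

lemma vote_nonneg {d m : ℕ} (F : Fin 3 → Inp d → Fin m × Bool) (p : Inp d) (j : Fin m)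
    (b : Bool) : 0 ≤ vote F (fun _ => 1/3) p j b := by
  apply Finset.sum_nonneg
  intro i _
  apply mul_nonneg (by norm_num)
  split <;> norm_num

lemma voteNC_nonneg {d m : ℕ} (F : Fin 3 → Inp d → Fin m × Bool) (p : Inp d) :
    0 ≤ voteNC F (fun _ => 1/3) p :=
  Finset.sum_nonneg fun j _ => vote_nonneg F p j false

lemma sum_pair {m : ℕ} (q : Fin m × Bool) :
    (∑ j : Fin m, (if q = (j, false) then (1:ℝ) else 0)) = (if q.2 = false then 1 else 0) := by
  obtain ⟨q1, q2⟩ := q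
  cases q2 <;> simp [Prod.ext_iff]

lemma ens_two_correct {d m : ℕ} (hm : 0 < m) (F : Fin 3 → Inp d → Fin m × Bool)
    (p : Inp d) (y : Fin m) (c : Fin 3)
    (H : ∀ i, i ≠ c → F i p = (y, true)) (Hc : F c p ≠ (y, true)) :
    ensemble hm F (fun _ => 1/3) p = (y, true) := by
  set w : Fin 3 → ℝ := fun _ => 1/3 with hw
  have hyt : vote F w p y true = 2/3 := by
    have := sum3 c (fun i => w i * (if F i p = (y, true) then 1 else 0)) (1/3)
      (fun i hi => by simp [H i hi, hw])
    rw [vote, this]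
    norm_num [hw, Hc]
  have hv : ∀ (j : Fin m) (b : Bool), ((y : Fin m), true) ≠ (j, b) →
      vote F w p j b = (1/3) * (if F c p = (j, b) then 1 else 0) := by
    intro j b hne
    have := sum3 c (fun i => w i * (if F i p = (j, b) then 1 else 0)) 0
      (fun i hi => by
        show w i * (if F i p = (j, b) then 1 else 0) = 0
        rw [H i hi, if_neg hne, mul_zero])
    rw [vote, this]
    simp [hw]
  have hNC : voteNC F w p = (1/3) * (if (F c p).2 = false then 1 else 0) := by
    rw [voteNC]
    have h1 : ∀ j : Fin m, vote F w p j false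
        = (1/3) * (if F c p = (j, false) then 1 else 0) :=
      fun j => hv j false (by simp)
    rw [Finset.sum_congr rfl (fun j _ => h1 j), ← Finset.mul_sum, sum_pair]
  have hytot : 2/3 ≤ voteTotal F w p y := by
    have h := vote_nonneg F p y false
    rw [← hw] at h
    rw [voteTotal, hyt]
    linarith
  have hjtot : ∀ j, j ≠ y → voteTotal F w p j ≤ 1/3 := by
    intro j hj
    have hd : ¬(F c p = (j, false) ∧ F c p = (j, true)) := by
      rintro ⟨hu, hv⟩; rw [hu] at hv; simp at hv
    rw [voteTotal, hv j false (by simp), hv j true (by simp [Ne.symm hj])]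
    split_ifs with hA hB hB
    · exact absurd ⟨hA, hB⟩ hd
    · norm_num
    · norm_num
    · norm_num
  have hlabel : ensLabel hm F w p = y := by
    have hfilter : (Finset.univ.filter fun j =>
        ∀ k, voteTotal F w p k ≤ voteTotal F w p j) = {y} := by
      apply Finset.eq_singleton_iff_unique_mem.mpr
      constructor
      · refine Finset.mem_filter.mpr ⟨Finset.mem_univ _, fun k => ?_⟩
        by_cases hk : k = y
        · subst hk; exact le_refl _
        · linarith [hjtot k hk]
      · intro j hj
        by_contra hS
        have h1 := (Finset.mem_filter.mp hj).2 y
        linarith [hjtot j hS]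
    obtain ⟨-, huniq⟩ := Finset.eq_singleton_iff_unique_mem.mp hfilter
    unfold ensLabel
    exact huniq _ (Finset.min'_mem _ _)
  have hcert : ensCert hm F w p = true := by
    rw [ensCert, if_pos]
    intro j hj
    rw [hlabel] at hj ⊢
    have hd : ¬((F c p).2 = false ∧ F c p = (j, true)) := by
      rintro ⟨hu, hv⟩; rw [hv] at hu; simp at hu
    rw [hNC, hv j true (by simp [Ne.symm hj]), hyt]
    split_ifs with hA hB hB
    · exact absurd ⟨hA, hB⟩ hd
    · norm_num
    · norm_num
    · norm_num
  rw [ensemble, hlabel, hcert]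

lemma ens_wrong {d m : ℕ} (hm : 0 < m) (hm2 : 2 ≤ m) (F : Fin 3 → Inp d → Fin m × Bool)
    (p : Inp d) (y : Fin m) (H : ∀ i, F i p ≠ (y, true)) :
    ensemble hm F (fun _ => 1/3) p ≠ (y, true) := by
  intro hEq
  set w : Fin 3 → ℝ := fun _ => 1/3 with hw
  have hlab : ensLabel hm F w p = y := congrArg Prod.fst hEq
  have hcert : ensCert hm F w p = true := congrArg Prod.snd hEq
  have hyt : vote F w p y true = 0 := by
    simp [vote, Fin.sum_univ_three, H 0, H 1, H 2]
  have : Nontrivial (Fin m) := Fin.nontrivial_iff_two_le.mpr hm2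
  obtain ⟨j, hj⟩ := exists_ne y
  rw [ensCert] at hcert
  split_ifs at hcert with hcond
  · have := hcond j (by rw [hlab]; exact hj)
    rw [hlab, hyt] at this
    have h1 := voteNC_nonneg F p
    have h2 := vote_nonneg F p j true
    rw [← hw] at h1 h2
    linarith

theorem voting_can_outperform_constituents (d m : ℕ) (hd : 1 ≤ d) (hm : 2 ≤ m)
    (x : Fin 100 → Inp d) (y : Fin 100 → Fin m)
    (F : Fin 3 → Inp d → Fin m × Bool)
    (h0 : ∀ i : Fin 100, (F 0 (x i) = (y i, true) ↔ (i : ℕ) ≤ 49))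
    (h1 : ∀ i : Fin 100, (F 1 (x i) = (y i, true) ↔ 25 ≤ (i : ℕ) ∧ (i : ℕ) ≤ 74))
    (h2 : ∀ i : Fin 100,
      (F 2 (x i) = (y i, true) ↔ (i : ℕ) ≤ 24 ∨ (50 ≤ (i : ℕ) ∧ (i : ℕ) ≤ 74))) :
    CRA (F 0) x y = 1 / 2 ∧ CRA (F 1) x y = 1 / 2 ∧ CRA (F 2) x y = 1 / 2 ∧
    CRA (ensemble (show 0 < m by omega) F (fun _ => 1 / 3)) x y = 3 / 4 ∧
    ∀ i : Fin 3,
      CRA (F i) x y < CRA (ensemble (show 0 < m by omega) F (fun _ => 1 / 3)) x y := by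
  have hm' : 0 < m := by omega
  have hens : ∀ i : Fin 100,
      (ensemble (show 0 < m by omega) F (fun _ => 1 / 3) (x i) = (y i, true) ↔ (i : ℕ) ≤ 74) := by
    intro i
    constructor
    · intro hEq
      by_contra h75
      push_neg at h75
      refine ens_wrong _ hm F (x i) (y i) ?_ hEq
      intro j
      fin_cases j
      · intro heq; have := (h0 i).mp heq; omega
      · intro heq; have := (h1 i).mp heq; omega
      · intro heq; have := (h2 i).mp heq; omega
    · intro h74
      by_cases hA : (i : ℕ) ≤ 24
      · refine ens_two_correct _ F (x i) (y i) 1 ?_ ?_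
        · intro j hj
          fin_cases j
          · exact (h0 i).mpr (by omega)
          · exact absurd rfl hj
          · exact (h2 i).mpr (Or.inl hA)
        · intro heq; have := (h1 i).mp heq; omega
      · by_cases hB : (i : ℕ) ≤ 49
        · refine ens_two_correct _ F (x i) (y i) 2 ?_ ?_
          · intro j hj
            fin_cases j
            · exact (h0 i).mpr hB
            · exact (h1 i).mpr (by omega)
            · exact absurd rfl hj
          · intro heq; have := (h2 i).mp heq; omega
        · refine ens_two_correct _ F (x i) (y i) 0 ?_ ?_
          · intro j hj
            fin_cases j
            · exact absurd rfl hj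
            · exact (h1 i).mpr (by omega)
            · exact (h2 i).mpr (Or.inr (by omega))
          · intro heq; have := (h0 i).mp heq; omega
  have c0 : CRA (F 0) x y = 1 / 2 := by
    unfold CRA
    rw [Finset.filter_congr (fun i _ => h0 i),
      show (Finset.univ.filter fun i : Fin 100 => (i : ℕ) ≤ 49).card = 50 from by decide]
    norm_num
  have c1 : CRA (F 1) x y = 1 / 2 := by
    unfold CRA
    rw [Finset.filter_congr (fun i _ => h1 i),
      show (Finset.univ.filter fun i : Fin 100 => 25 ≤ (i : ℕ) ∧ (i : ℕ) ≤ 74).card = 50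
        from by decide]
    norm_num
  have c2 : CRA (F 2) x y = 1 / 2 := by
    unfold CRA
    rw [Finset.filter_congr (fun i _ => h2 i),
      show (Finset.univ.filter fun i : Fin 100 =>
        (i : ℕ) ≤ 24 ∨ (50 ≤ (i : ℕ) ∧ (i : ℕ) ≤ 74)).card = 50 from by decide]
    norm_num
  have cE : CRA (ensemble (show 0 < m by omega) F (fun _ => 1 / 3)) x y = 3 / 4 := by
    unfold CRA
    rw [Finset.filter_congr (fun i _ => hens i),
      show (Finset.univ.filter fun i : Fin 100 => (i : ℕ) ≤ 74).card = 75 from by decide]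
    norm_num
  refine ⟨c0, c1, c2, cE, ?_⟩
  intro i
  have hi : CRA (F i) x y = 1 / 2 := by fin_cases i <;> assumption
  rw [hi, cE]
  norm_num
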